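/- arXiv:2605.14428 — 6 statements merged into one kernel-verified Lean document; each statement's English description precedes it below -/
import Mathlib

section
/- Let A be a matrix over a field with at most q−1 distinct values of non-zero entries, and let d be the number of distinct non-zero rows of A. Then rank(A) ≤ d ≤ q^{rank(A)} − 1. -/
/-!
Pick a set `s` of `rank A` columns spanning the column space. Every linear functional on `F^m`
that vanishes on the columns in `s` vanishes on all columns; applied to differences of
coordinate functionals, this says that a row is determined by its entries in `s`, and a non-zero
row stays non-zero there. Those entries lie in the set of at most `q` values (the non-zero
entries together with `0`), so there are at most `q ^ rank A - 1` distinct non-zero rows.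
The lower bound holds because the distinct non-zero rows span the row space.
-/

open Finset

theorem Nat.succ_pow_sub_one_le_pow_sub_one {a b : ℕ} (h : a ≤ b - 1) (r : ℕ) :
    (a + 1) ^ r - 1 ≤ b ^ r - 1 := by
  rcases b.eq_zero_or_pos with rfl | hb
  · obtain rfl : a = 0 := by omega
    simp
  · gcongr
    omega

theorem Finset.card_le_card_pow_card_sub_one {ι α : Type*} [Zero α] [DecidableEq α]
    {D : Finset (ι → α)} {s : Finset ι} {V : Finset α} (h0 : 0 ∈ V)
    (hV : ∀ v ∈ D, ∀ j ∈ s, v j ∈ V)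
    (hinj : ∀ v ∈ D, ∀ w ∈ D, (∀ j ∈ s, v j = w j) → v = w)
    (hne : ∀ v ∈ D, ∃ j ∈ s, v j ≠ 0) :
    D.card ≤ V.card ^ s.card - 1 := by
  classical
  have h0T : (0 : s → α) ∈ Fintype.piFinset fun _ => V := Fintype.mem_piFinset.2 fun _ => h0
  calc D.card ≤ ((Fintype.piFinset fun _ : s => V).erase 0).card := by
        refine card_le_card_of_injOn (fun (v : ι → α) (j : s) => v j) (fun v hv => ?_) ?_
        · obtain ⟨j, hj, hvj⟩ := hne v hv
          simp only [coe_erase, Set.mem_sdiff, mem_coe, Fintype.mem_piFinset,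
            Set.mem_singleton_iff]
          exact ⟨fun j => hV v hv j j.2, fun h => hvj (congrFun h ⟨j, hj⟩)⟩
        · intro v hv w hw h
          exact hinj v hv w hw fun j hj => congrFun h ⟨j, hj⟩
    _ = V.card ^ s.card - 1 := by
        rw [card_erase_of_mem h0T, Fintype.card_piFinset, prod_const, card_univ,
          Fintype.card_coe]

namespace Matrix

variable {m n F : Type*} [Field F]

theorem rank_le_card_nonzero_rows [Fintype m] [Fintype n] [DecidableEq (n → F)]
    (A : Matrix m n F) :
    A.rank ≤ ((univ.image fun i : m => A i).filter (· ≠ 0)).card := by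
  set D := (univ.image fun i : m => A i).filter (· ≠ 0)
  have hrows : Submodule.span F (Set.range A.row) ≤ Submodule.span F (D : Set (n → F)) := by
    rw [Submodule.span_le]
    rintro _ ⟨i, rfl⟩
    by_cases h : A i = 0
    · simp [row, h]
    · exact Submodule.subset_span (mem_filter.2 ⟨mem_image_of_mem _ (mem_univ i), h⟩)
  rw [rank_eq_finrank_span_row]
  exact (Submodule.finrank_mono hrows).trans (finrank_span_finset_le_card D)

theorem exists_finset_card_eq_rank_col_mem_span [Fintype m] [Fintype n] (A : Matrix m n F) :
    ∃ s : Finset n, s.card = A.rank ∧ ∀ j, A.col j ∈ Submodule.span F (A.col '' s) := by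
  obtain ⟨κ, a, ha, hspan, hli⟩ := exists_linearIndependent' F A.col
  have : Fintype κ := Fintype.ofInjective a ha
  refine ⟨univ.map ⟨a, ha⟩, ?_, fun j => ?_⟩
  · rw [card_map, card_univ, ← finrank_span_eq_card hli, hspan, rank_eq_finrank_span_cols]
  · rw [coe_map, coe_univ, Set.image_univ, Function.Embedding.coeFn_mk, ← Set.range_comp, hspan]
    exact Submodule.subset_span ⟨j, rfl⟩

section

variable {A : Matrix m n F} {s : Set n}

theorem apply_col_eq_of_col_mem_span (hs : ∀ j, A.col j ∈ Submodule.span F (A.col '' s))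
    {f g : (m → F) →ₗ[F] F} (h : ∀ j ∈ s, f (A.col j) = g (A.col j)) (j : n) :
    f (A.col j) = g (A.col j) :=
  LinearMap.eqOn_span' (by rintro _ ⟨k, hk, rfl⟩; exact h k hk) (hs j)

theorem row_eq_row_of_col_mem_span (hs : ∀ j, A.col j ∈ Submodule.span F (A.col '' s))
    {i i' : m} (h : ∀ j ∈ s, A i j = A i' j) : A i = A i' :=
  funext (apply_col_eq_of_col_mem_span hs (f := LinearMap.proj i) (g := LinearMap.proj i') h)

theorem row_eq_zero_of_col_mem_span (hs : ∀ j, A.col j ∈ Submodule.span F (A.col '' s))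
    {i : m} (h : ∀ j ∈ s, A i j = 0) : A i = 0 :=
  funext (apply_col_eq_of_col_mem_span hs (f := LinearMap.proj i) (g := 0) h)

end

end Matrix

theorem stmt0 {m n F : Type*} [Fintype m] [Fintype n] [Field F] [DecidableEq F]
    (A : Matrix m n F) (q : ℕ)
    (hq : ((Finset.univ.image fun p : m × n => A p.1 p.2).filter (· ≠ 0)).card ≤ q - 1) :
    A.rank ≤ ((Finset.univ.image fun i : m => A i).filter (· ≠ 0)).card ∧
      ((Finset.univ.image fun i : m => A i).filter (· ≠ 0)).card ≤ q ^ A.rank - 1 := by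
  set E := (univ.image fun p : m × n => A p.1 p.2).filter (· ≠ 0)
  have hentry : ∀ i j, A i j ∈ insert 0 E := fun i j => by
    by_cases h : A i j = 0
    · simp [h]
    · exact mem_insert_of_mem (by simpa [E, h] using ⟨i, j, rfl⟩)
  obtain ⟨s, hcard, hs⟩ := A.exists_finset_card_eq_rank_col_mem_span
  refine ⟨A.rank_le_card_nonzero_rows, ?_⟩
  calc _ ≤ (insert 0 E).card ^ s.card - 1 :=
        card_le_card_pow_card_sub_one (mem_insert_self 0 E) ?_ ?_ ?_
    _ ≤ (E.card + 1) ^ A.rank - 1 := by rw [hcard]; gcongr; exact card_insert_le 0 E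
    _ ≤ q ^ A.rank - 1 := Nat.succ_pow_sub_one_le_pow_sub_one hq _
  all_goals simp only [mem_filter, mem_image, mem_univ, true_and]
  · rintro _ ⟨⟨i, rfl⟩, -⟩ j -
    exact hentry i j
  · rintro _ ⟨⟨i, rfl⟩, -⟩ _ ⟨⟨i', rfl⟩, -⟩ h
    exact Matrix.row_eq_row_of_col_mem_span hs h
  · rintro _ ⟨⟨i, rfl⟩, hi⟩
    by_contra! h
    exact hi (Matrix.row_eq_zero_of_col_mem_span hs h)
end

section
/- Let A be a U×V matrix over the binary field F₂ of rank k. Then there exist ℓ ≤ 2^k − 1 pairs (U_i, V_i) with U_i ⊆ U and V_i ⊆ V such that the sets U_i × V_i are pairwise disjoint and the (a,b)-entry of A equals 1 if and only if (a,b) ∈ U_i × V_i for some i. -/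
/-! Group the rows of `A` by value: each distinct nonzero row `r` contributes the rectangle
`{a | A a = r} × {b | r b = 1}`. These rectangles are disjoint because their row sets are fibres
of `A`, and there are at most `2 ^ k - 1` of them because the distinct nonzero rows are nonzero
vectors of the row space, which has `2 ^ k` elements. -/

open Finset

namespace Matrix

variable {U V : Type*} [Fintype U]

theorem card_nonzero_rows_le {K : Type*} [Field K] [Finite K] [Fintype V] [DecidableEq K]
    (A : Matrix U V K) :
    ((univ.image A).erase 0).card ≤ Nat.card K ^ A.rank - 1 := by
  set W := Submodule.span K (Set.range A.row)
  have hsub : ↑((univ.image A).erase 0) ⊆ (W : Set (V → K)) \ {0} := by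
    intro r hr
    obtain ⟨hr0, hrA⟩ := mem_erase.1 hr
    obtain ⟨a, -, rfl⟩ := mem_image.1 hrA
    exact ⟨Submodule.subset_span ⟨a, rfl⟩, hr0⟩
  calc ((univ.image A).erase 0).card
      ≤ ((W : Set (V → K)) \ {0}).ncard := by
        rw [← Set.ncard_coe_finset]; exact Set.ncard_le_ncard hsub (Set.toFinite _)
    _ = Nat.card W - 1 := by
        rw [Set.ncard_sdiff_singleton_of_mem W.zero_mem]; rfl
    _ = Nat.card K ^ A.rank - 1 := by
        rw [Module.natCard_eq_pow_finrank (K := K), A.rank_eq_finrank_span_row]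

theorem apply_eq_one_iff_exists_nonzero_row {R : Type*} [Zero R] [One R] [NeZero (1 : R)]
    [DecidableEq (V → R)] (A : Matrix U V R) (a : U) (b : V) :
    A a b = 1 ↔ ∃ r ∈ (univ.image A).erase 0, A a = r ∧ r b = 1 := by
  constructor
  · intro hab
    refine ⟨A a, mem_erase.2 ⟨fun h => ?_, mem_image_of_mem A (mem_univ a)⟩, rfl, hab⟩
    simp [h] at hab
  · rintro ⟨r, -, rfl, hb⟩
    exact hb

end Matrix

theorem stmt1 {U V : Type*} [Fintype U] [Fintype V] (A : Matrix U V (ZMod 2)) :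
    ∃ (ℓ : ℕ) (Us : Fin ℓ → Set U) (Vs : Fin ℓ → Set V),
      ℓ ≤ 2 ^ A.rank - 1 ∧
      (∀ i j : Fin ℓ, i ≠ j → Disjoint (Us i ×ˢ Vs i) (Us j ×ˢ Vs j)) ∧
      ∀ a b, A a b = 1 ↔ ∃ i, a ∈ Us i ∧ b ∈ Vs i := by
  classical
  set F := (Finset.univ.image A).erase 0
  let e : Fin F.card ≃ F := F.equivFin.symm
  refine ⟨F.card, fun i => {a | A a = e i}, fun i => {b | (e i : V → ZMod 2) b = 1},
    by simpa using A.card_nonzero_rows_le, ?_, fun a b => ?_⟩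
  · intro i j hij
    rw [Set.disjoint_left]
    rintro ⟨a, b⟩ ⟨ha, -⟩ ⟨ha', -⟩
    exact hij (e.injective (Subtype.ext (ha.symm.trans ha')))
  · rw [A.apply_eq_one_iff_exists_nonzero_row]
    constructor
    · rintro ⟨r, hr, ha, hb⟩
      exact ⟨e.symm ⟨r, hr⟩, by simpa using ha, by simpa using hb⟩
    · rintro ⟨i, ha, hb⟩
      exact ⟨e i, (e i).2, ha, hb⟩
end

section
/- Let M be a matroid on ground set E with a standard representation A = (I_r | A₀) over a field F, and let A' be the E×E symmetric matrix with block form [[0, A₀],[A₀ᵀ, 0]]. Then for every subset X ⊆ E, the matroid connectivity λ_M(X) equals the cut-rank of X in A', i.e., λ_M(X) = rank(A'[X, E∖X]). -/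
/-- A branch-decomposition of a ground set `E`: a subcubic tree together with a
bijection from `E` to the leaves of the tree. -/
structure BranchDecomp (E : Type*) where
  V : Type
  [fV : Fintype V]
  G : SimpleGraph V
  [dA : DecidableRel G.Adj]
  isTree : G.IsTree
  subcubic : ∀ v : V, G.degree v = 1 ∨ G.degree v = 3
  L : E ≃ {v : V // G.degree v = 1}

attribute [instance] BranchDecomp.fV BranchDecomp.dA

/-- The side of the edge `{u,v}` containing `u`: those elements of `E` whose leaf is
reachable from `u` after deleting the edge. -/
def BranchDecomp.side {E : Type*} (D : BranchDecomp E) (u v : D.V) : Set E :=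
  {x : E | (D.G.deleteEdges {s(u, v)}).Reachable u (D.L x).1}

/-- The width of a branch-decomposition with respect to a set function `lam`. -/
noncomputable def BranchDecomp.width {E : Type*} (D : BranchDecomp E)
    (lam : Set E → ℕ) : ℕ :=
  Finset.sup (Finset.univ.filter fun p : D.V × D.V => D.G.Adj p.1 p.2)
    (fun p => lam (D.side p.1 p.2))

/-- The branch-width of a set function `lam : Set E → ℕ`. -/
noncomputable def branchWidth {E : Type*} (lam : Set E → ℕ) : ℕ :=
  if Nat.card E ≤ 1 then 0
  else sInf {w | ∃ D : BranchDecomp E, D.width lam = w}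

/-- The path-width of a set function `lam : Set E → ℕ` : the minimum over linear layouts
of the maximum of `lam` on proper prefixes. -/
noncomputable def pathWidth (E : Type*) [Fintype E] (lam : Set E → ℕ) : ℕ :=
  if Fintype.card E ≤ 1 then 0
  else sInf {w | ∃ f : Fin (Fintype.card E) ≃ E,
    (Finset.sup (Finset.univ.filter fun i : Fin (Fintype.card E) =>
        (i : ℕ) < Fintype.card E - 1)
      (fun i => lam {x | f.symm x ≤ i})) = w}

/-- `lam` is a connectivity function: symmetric, submodular, zero on the empty set. -/
structure IsConnFn {E : Type*} (lam : Set E → ℕ) : Prop where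
  symm : ∀ X, lam X = lam Xᶜ
  submod : ∀ X Y, lam (X ∩ Y) + lam (X ∪ Y) ≤ lam X + lam Y
  empty : lam ∅ = 0

/-- The rank of the set `X` of columns of the matrix `A`. -/
noncomputable def colRank {m E F : Type*} [Fintype m] [Field F]
    (A : Matrix m E F) (X : Set E) : ℕ :=
  Module.finrank F (Submodule.span F (Matrix.transpose A '' X))

/-- The connectivity function of the matroid represented by the columns of `A`. -/
noncomputable def matLam {m E F : Type*} [Fintype m] [Field F]
    (A : Matrix m E F) (X : Set E) : ℕ :=
  colRank A X + colRank A Xᶜ - colRank A Set.univ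

/-- The branch-width of the matroid represented by the columns of `A`. -/
noncomputable def matBW {m E F : Type*} [Fintype m] [Field F]
    (A : Matrix m E F) : ℕ :=
  branchWidth (matLam A)

/-- A matrix represents a simple matroid iff it has no zero column and no two
distinct columns are linearly dependent. -/
def SimpleRep {m n F : Type*} [Field F] (A : Matrix m n F) : Prop :=
  (∀ j, Matrix.transpose A j ≠ 0) ∧
    ∀ j j' : n, j ≠ j' → ∀ c : F, Matrix.transpose A j ≠ c • Matrix.transpose A j'

open scoped Classical in
/-- The cut-rank of a set `X` for a square matrix `A`: the rank of the submatrix with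
rows in `X` and columns in the complement of `X`. -/
noncomputable def cutRank {E F : Type*} [Fintype E] [Field F]
    (A : Matrix E E F) (X : Set E) : ℕ :=
  (A.submatrix (fun x : X => (x : E)) (fun y : ↥Xᶜ => (y : E))).rank

/-!
Order the rows of `(I | A₀)` as `(r ∩ X, r ∖ X)` and the columns in `X` as `(r ∩ X, c ∩ X)`:
they form the block matrix `[[I, *], [0, A₀[r ∖ X, c ∩ X]]]`, so
`r(X) = |r ∩ X| + rank A₀[r ∖ X, c ∩ X]`. Adding the same formula for `E ∖ X` and subtracting
`r(E) = |r|` leaves `rank A₀[r ∖ X, c ∩ X] + rank A₀[r ∩ X, c ∖ X]`. The cut matrix `A'[X, E ∖ X]`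
is block anti-diagonal with the blocks `A₀[r ∩ X, c ∖ X]` and `A₀[r ∖ X, c ∩ X]ᵀ`, so its rank is
the same sum.
-/

open Matrix

theorem Submodule.finrank_prod {F V W : Type*} [Field F] [AddCommGroup V] [AddCommGroup W]
    [Module F V] [Module F W] [FiniteDimensional F V] [FiniteDimensional F W]
    (p : Submodule F V) (q : Submodule F W) :
    Module.finrank F (p.prod q) = Module.finrank F p + Module.finrank F q := by
  let e : p.prod q ≃ₗ[F] p × q :=
    { toFun x := (⟨x.1.1, x.2.1⟩, ⟨x.1.2, x.2.2⟩)
      invFun y := ⟨(y.1, y.2), y.1.2, y.2.2⟩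
      map_add' _ _ := rfl
      map_smul' _ _ := rfl }
  rw [e.finrank_eq, Module.finrank_prod]

namespace Matrix

variable {F : Type*} [Field F] {m n p q : Type*} [Fintype m] [Fintype n] [Fintype p] [Fintype q]

theorem rank_fromBlocks_zero₁₂_zero₂₁ (B : Matrix m n F) (C : Matrix p q F) :
    (fromBlocks B 0 0 C).rank = B.rank + C.rank := by
  let eₘ := LinearEquiv.sumArrowLequivProdArrow m p F F
  let eₙ := LinearEquiv.sumArrowLequivProdArrow n q F F
  have h : (fromBlocks B 0 0 C).mulVecLin =
      eₘ.symm.toLinearMap ∘ₗ B.mulVecLin.prodMap C.mulVecLin ∘ₗ eₙ.toLinearMap := by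
    ext x (i | i) <;>
      simp [eₘ, eₙ, mulVec, dotProduct, Fintype.sum_sum_type, fromBlocks]
  rw [rank, h, LinearMap.range_comp, LinearMap.range_comp, LinearEquiv.range, Submodule.map_top,
    LinearEquiv.finrank_map_eq, LinearMap.range_prodMap, Submodule.finrank_prod, rank, rank]

theorem rank_fromBlocks_zero₁₁_zero₂₂ (B : Matrix m q F) (C : Matrix p n F) :
    (fromBlocks (0 : Matrix m n F) B C 0).rank = B.rank + C.rank := by
  have h : fromBlocks (0 : Matrix m n F) B C 0 =
      (fromBlocks B 0 0 C).submatrix (Equiv.refl _) (Equiv.sumComm n q) := by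
    ext (i | i) (j | j) <;> rfl
  rw [h, rank_submatrix, rank_fromBlocks_zero₁₂_zero₂₁]

theorem rank_fromBlocks_one_zero₂₁ [DecidableEq m] (B : Matrix m q F) (C : Matrix p q F) :
    (fromBlocks (1 : Matrix m m F) B 0 C).rank = Fintype.card m + C.rank := by
  classical
  have hfactor : fromBlocks (1 : Matrix m m F) B 0 C =
      fromBlocks (1 : Matrix m m F) 0 0 C * fromBlocks 1 B 0 (1 : Matrix q q F) := by
    simp [fromBlocks_multiply]
  have hunit : IsUnit (fromBlocks (1 : Matrix m m F) B 0 (1 : Matrix q q F)).det := by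
    simp
  rw [hfactor, rank_mul_eq_left_of_isUnit_det _ _ hunit, rank_fromBlocks_zero₁₂_zero₂₁, rank_one]

end Matrix

theorem colRank_eq_rank_submatrix {F m E : Type*} [Field F] [Fintype m] (A : Matrix m E F)
    (X : Set E) [Fintype X] : colRank A X = (A.submatrix id ((↑) : X → E)).rank := by
  rw [colRank, rank_eq_finrank_span_cols]
  exact congr_arg (fun s => Module.finrank F (Submodule.span F s)) (Set.image_eq_range _ _)

section StandardRepresentation

variable {F r c : Type*} [Field F] [Fintype r] [Fintype c] (A0 : Matrix r c F) (X : Set (r ⊕ c))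

open scoped Classical in
theorem colRank_fromCols_one [DecidableEq r] :
    colRank (fromCols (1 : Matrix r r F) A0) X = (Sum.inl ⁻¹' X).ncard +
      (A0.submatrix ((↑) : ↥(Sum.inl ⁻¹' X)ᶜ → r) ((↑) : Sum.inr ⁻¹' X → c)).rank := by
  let P := Sum.inl ⁻¹' X
  let Q := Sum.inr ⁻¹' X
  have hblocks : (fromCols (1 : Matrix r r F) A0).submatrix id ((↑) : X → r ⊕ c) =
      (fromBlocks (1 : Matrix P P F) (A0.submatrix ((↑) : P → r) ((↑) : Q → c)) 0
        (A0.submatrix ((↑) : ↥Pᶜ → r) ((↑) : Q → c))).submatrix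
        (Equiv.sumCompl (· ∈ P)).symm (Equiv.subtypeSum : X ≃ P ⊕ Q) := by
    ext i ⟨j | j, hj⟩
    · by_cases hi : i ∈ P
      · simp [Equiv.subtypeSum, hi, one_apply]
      · have hij : i ≠ j := by rintro rfl; exact hi hj
        simp [Equiv.subtypeSum, hi, one_apply, hij]
    · by_cases hi : i ∈ P <;> simp [Equiv.subtypeSum, hi]
  rw [colRank_eq_rank_submatrix, hblocks, rank_submatrix, rank_fromBlocks_one_zero₂₁,
    Set.ncard_eq_toFinset_card', Set.toFinset_card]

open scoped Classical in
theorem matLam_fromCols_one [DecidableEq r] :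
    matLam (fromCols (1 : Matrix r r F) A0) X =
      (A0.submatrix ((↑) : ↥(Sum.inl ⁻¹' X)ᶜ → r) ((↑) : Sum.inr ⁻¹' X → c)).rank +
      (A0.submatrix ((↑) : Sum.inl ⁻¹' X → r) ((↑) : ↥(Sum.inr ⁻¹' X)ᶜ → c)).rank := by
  have hcompl := colRank_fromCols_one A0 Xᶜ
  have huniv := colRank_fromCols_one A0 Set.univ
  rw [Set.preimage_compl, Set.preimage_compl, compl_compl] at hcompl
  rw [Set.preimage_univ, Set.compl_univ, Set.ncard_univ] at huniv
  rw [Subsingleton.elim (A0.submatrix _ _) 0, rank_zero, add_zero] at huniv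
  rw [matLam, colRank_fromCols_one, hcompl, huniv, ← Set.ncard_add_ncard_compl (Sum.inl ⁻¹' X)]
  rw [add_add_add_comm, Nat.add_sub_cancel_left]
  -- the two sides differ only in the `Fintype` instances of the column index types
  congr!

open scoped Classical in
theorem cutRank_fromBlocks_transpose :
    cutRank (fromBlocks (0 : Matrix r r F) A0 A0ᵀ (0 : Matrix c c F)) X =
      (A0.submatrix ((↑) : Sum.inl ⁻¹' X → r) ((↑) : ↥(Sum.inr ⁻¹' X)ᶜ → c)).rank +
      (A0.submatrix ((↑) : ↥(Sum.inl ⁻¹' X)ᶜ → r) ((↑) : Sum.inr ⁻¹' X → c)).rank := by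
  let P := Sum.inl ⁻¹' X
  let Q := Sum.inr ⁻¹' X
  have hblocks : (fromBlocks (0 : Matrix r r F) A0 A0ᵀ (0 : Matrix c c F)).submatrix
        ((↑) : X → r ⊕ c) ((↑) : ↥Xᶜ → r ⊕ c) =
      (fromBlocks 0 (A0.submatrix ((↑) : P → r) ((↑) : ↥Qᶜ → c))
        (A0.submatrix ((↑) : ↥Pᶜ → r) ((↑) : Q → c))ᵀ 0).submatrix
        (Equiv.subtypeSum : X ≃ P ⊕ Q) (Equiv.subtypeSum : ↥Xᶜ ≃ ↥Pᶜ ⊕ ↥Qᶜ) := by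
    ext ⟨i | i, _⟩ ⟨j | j, _⟩ <;> rfl
  rw [cutRank, hblocks, rank_submatrix, rank_fromBlocks_zero₁₁_zero₂₂, rank_transpose]

end StandardRepresentation

theorem stmt5 {r c F : Type*} [Fintype r] [Fintype c] [DecidableEq r] [Field F]
    (A0 : Matrix r c F) (X : Set (r ⊕ c)) :
    matLam (Matrix.fromCols (1 : Matrix r r F) A0) X
      = cutRank (Matrix.fromBlocks (0 : Matrix r r F) A0
          (Matrix.transpose A0) (0 : Matrix c c F)) X := by
  rw [matLam_fromCols_one, cutRank_fromBlocks_transpose, add_comm]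
end

section
/- Let A be a matrix over a field F representing a matroid M, and let K ⊆ F be a set with −K = K such that every non-zero subdeterminant of A belongs to K. Then there exists a non-zero α ∈ F and a standard representation of M all of whose non-zero entries belong to αK. -/
/-!
Pick columns `g` of `A` forming a basis of its column space, so that `A = A[·, g] * B` for
some `B`, and rows `f` making `D = A[f, g]` invertible; then `D * B = A[f, ·]`. Since `A[·, g]`
has independent columns, `A` and `B` have the same independent sets of columns, and `B[·, g] = 1`.
By Cramer's rule `det D * B i j` is the determinant of `A[f, g]` with its `i`-th column replaced
by column `j` of `A`, i.e. a subdeterminant of `A`; so `α = (det D)⁻¹` works.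
-/

open Matrix Submodule Set

namespace Matrix

variable {k m n R F : Type*}

theorem updateCol_submatrix_eq_submatrix_update [DecidableEq k] (A : Matrix m n R)
    (f : k → m) (g : k → n) (i : k) (j : n) :
    (A.submatrix f g).updateCol i (fun x => A (f x) j) = A.submatrix f (Function.update g i j) := by
  ext x y
  by_cases hy : y = i
  · subst hy; simp
  · simp [hy]

section CommRing

variable [CommRing R]

theorem exists_mul_eq_of_col_mem_span [Fintype k] {C : Matrix m k R} {A : Matrix m n R}
    (h : ∀ j, A.col j ∈ span R (range C.col)) : ∃ B : Matrix k n R, C * B = A := by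
  simp_rw [← range_mulVecLin] at h
  choose b hb using h
  exact ⟨of fun i j => b j i, by
    ext x j; simpa [mul_apply, mulVec, dotProduct] using congrFun (hb j) x⟩

theorem linearIndependent_col_mul_comp_iff [Fintype k] {C : Matrix m k R}
    (hC : LinearIndependent R C.col) (B : Matrix k n R) {ι : Type*} (v : ι → n) :
    LinearIndependent R ((C * B).col ∘ v) ↔ LinearIndependent R (B.col ∘ v) := by
  have hcol : (C * B).col ∘ v = C.mulVecLin ∘ (B.col ∘ v) := by
    funext j; ext x; simp [mul_apply, mulVec, dotProduct]
  rw [hcol, LinearMap.linearIndependent_iff _ (LinearMap.ker_eq_bot.mpr (mulVec_injective_iff.mpr hC))]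

variable [Fintype k] [DecidableEq k]

theorem injective_of_det_submatrix_ne_zero {A : Matrix m n R} {f : k → m} {g : k → n}
    (h : (A.submatrix f g).det ≠ 0) : f.Injective ∧ g.Injective := by
  constructor
  · by_contra hf
    obtain ⟨i, i', hfi, hii'⟩ := Function.not_injective_iff.mp hf
    rw [← det_transpose, transpose_submatrix] at h
    exact h (det_zero_of_column_eq hii' (by simp [hfi]))
  · by_contra hg
    obtain ⟨i, i', hgi, hii'⟩ := Function.not_injective_iff.mp hg
    exact h (det_zero_of_column_eq hii' (by simp [hgi]))

theorem det_mul_apply_eq_det_updateCol {D : Matrix k k R} {x b : k → R} (h : D *ᵥ x = b)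
    (i : k) : D.det * x i = (D.updateCol i b).det := by
  rw [← cramer_apply D b i, ← h, cramer_eq_adjugate_mulVec, mulVec_mulVec, adjugate_mul, smul_mulVec,
    one_mulVec]
  rfl

theorem det_submatrix_mul_apply {A : Matrix m n R} {f : k → m} {g : k → n} {B : Matrix k n R}
    (h : A.submatrix f g * B = A.submatrix f id) (i : k) (j : n) :
    (A.submatrix f g).det * B i j = (A.submatrix f (Function.update g i j)).det := by
  rw [← updateCol_submatrix_eq_submatrix_update]
  refine det_mul_apply_eq_det_updateCol (x := fun i => B i j) (funext fun x => ?_) i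
  simpa [mul_apply, mulVec, dotProduct] using congrFun (congrFun h x) j

theorem submatrix_id_eq_one_of_mul_eq {A : Matrix m n R} {f : k → m} {g : k → n}
    {B : Matrix k n R} (h : A.submatrix f g * B = A.submatrix f id)
    (hD : IsUnit (A.submatrix f g).det) : B.submatrix id g = 1 := by
  have : A.submatrix f g * B.submatrix id g = A.submatrix f g := by
    rw [← submatrix_id_id (A.submatrix f g), ← submatrix_mul _ _ _ _ _ Function.bijective_id, h]
    rfl
  rw [← nonsing_inv_mul_cancel_left _ (B.submatrix id g) hD, this, nonsing_inv_mul _ hD]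

end CommRing

section Field

variable [Field F]

theorem exists_linearIndependent_col_comp_span [Finite m] (A : Matrix m n F) :
    ∃ (r : ℕ) (g : Fin r → n), LinearIndependent F (A.col ∘ g) ∧
      span F (range (A.col ∘ g)) = span F (range A.col) := by
  obtain ⟨κ, a, -, hspan, hli⟩ := exists_linearIndependent' F A.col
  have := hli.finite
  let e := Finite.equivFin κ
  refine ⟨Nat.card κ, a ∘ e.symm, hli.comp e.symm e.symm.injective, ?_⟩
  rw [← hspan, ← Function.comp_assoc, EquivLike.range_comp]

theorem exists_det_submatrix_ne_zero_of_linearIndependent_col [Fintype m] {r : ℕ}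
    {C : Matrix m (Fin r) F} (hC : LinearIndependent F C.col) :
    ∃ f : Fin r → m, (C.submatrix f id).det ≠ 0 := by
  obtain ⟨s, f, hli, hspan⟩ := exists_linearIndependent_col_comp_span Cᵀ
  have hs : s = r := by
    have hr : C.rank = r := by
      rw [← rank_transpose, LinearIndependent.rank_matrix hC, Fintype.card_fin]
    rw [rank_eq_finrank_span_row, ← col_transpose, ← hspan, finrank_span_eq_card hli,
      Fintype.card_fin] at hr
    exact hr
  subst hs
  have hunit : IsUnit (C.submatrix f id) := linearIndependent_rows_iff_isUnit.mp hli
  exact ⟨f, ((isUnit_iff_isUnit_det _).mp hunit).ne_zero⟩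

end Field

end Matrix

theorem stmt10_general {m n F : Type*} [Fintype m] [Field F]
    (A : Matrix m n F) (K : Set F)
    (hsub : ∀ (k : ℕ) (f : Fin k → m) (g : Fin k → n), Function.Injective f →
      Function.Injective g → (A.submatrix f g).det ≠ 0 → (A.submatrix f g).det ∈ K) :
    ∃ (α : F) (r : ℕ) (B : Matrix (Fin r) n F),
      α ≠ 0 ∧
      (∃ g : Fin r → n, Function.Injective g ∧
        ∀ i i' : Fin r, B i (g i') = if i = i' then 1 else 0) ∧
      (∀ i j, B i j ≠ 0 → ∃ κ ∈ K, B i j = α * κ) ∧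
      (∀ S : Set n, LinearIndependent F (fun j : S => Matrix.transpose A j.1) ↔
        LinearIndependent F (fun j : S => Matrix.transpose B j.1)) := by
  classical
  obtain ⟨r, g, hg_li, hg_span⟩ := A.exists_linearIndependent_col_comp_span
  obtain ⟨f, hD⟩ :=
    exists_det_submatrix_ne_zero_of_linearIndependent_col (C := A.submatrix id g) hg_li
  obtain ⟨B, hCB⟩ := exists_mul_eq_of_col_mem_span (C := A.submatrix id g) (A := A)
    fun j => hg_span ▸ subset_span (mem_range_self j)
  simp only [submatrix_submatrix, Function.id_comp, Function.comp_id] at hD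
  have hDB : A.submatrix f g * B = A.submatrix f id := by
    conv_rhs => rw [← hCB, submatrix_mul _ _ _ id _ Function.bijective_id, submatrix_id_id]
    rfl
  obtain ⟨hf, hg⟩ := injective_of_det_submatrix_ne_zero hD
  refine ⟨(A.submatrix f g).det⁻¹, r, B, inv_ne_zero hD, ⟨g, hg, fun i i' => ?_⟩,
    fun i j hij => ?_, fun S => ?_⟩
  · rw [← one_apply, ← submatrix_id_eq_one_of_mul_eq hDB (Ne.isUnit hD)]
    rfl
  · have key := det_submatrix_mul_apply hDB i j
    have hdet : (A.submatrix f (Function.update g i j)).det ≠ 0 := key ▸ mul_ne_zero hD hij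
    refine ⟨_, hsub r f _ hf (injective_of_det_submatrix_ne_zero hdet).2 hdet, ?_⟩
    rw [← key, inv_mul_cancel_left₀ hD]
  · rw [← hCB]
    exact linearIndependent_col_mul_comp_iff hg_li B Subtype.val

theorem stmt10 {m n F : Type*} [Fintype m] [Fintype n] [Field F]
    (A : Matrix m n F) (K : Set F) (hK : ∀ x : F, x ∈ K ↔ -x ∈ K)
    (hsub : ∀ (k : ℕ) (f : Fin k → m) (g : Fin k → n), Function.Injective f →
      Function.Injective g → (A.submatrix f g).det ≠ 0 → (A.submatrix f g).det ∈ K) :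
    ∃ (α : F) (r : ℕ) (B : Matrix (Fin r) n F),
      α ≠ 0 ∧
      (∃ g : Fin r → n, Function.Injective g ∧
        ∀ i i' : Fin r, B i (g i') = if i = i' then 1 else 0) ∧
      (∀ i j, B i j ≠ 0 → ∃ κ ∈ K, B i j = α * κ) ∧
      (∀ S : Set n, LinearIndependent F (fun j : S => Matrix.transpose A j.1) ↔
        LinearIndependent F (fun j : S => Matrix.transpose B j.1)) :=
  stmt10_general A K hsub
end

section
/- Let λ be a connectivity function on subsets of a finite set E and let P be a robust partition of E such that (i) λ(∪_{X∈Q} X) ≠ 1 for all Q ⊆ P, and (ii) for every X ⊆ E, if there exist two distinct parts X₁, X₂ ∈ P each of which meets both X and its complement, then λ(X) > 1. If λ admits a branch-decomposition of width at most 1, then λ(X) = 0 for every part X ∈ P. -/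
namespace SimpleGraph

variable {V : Type*} {G : SimpleGraph V} {u v t x : V}

lemma Reachable.mem_of_adj_closed {S : Set V} (hS : ∀ x y, G.Adj x y → x ∈ S → y ∈ S)
    (huv : G.Reachable u v) (hu : u ∈ S) : v ∈ S := by
  rw [reachable_eq_reflTransGen] at huv
  induction huv with
  | refl => exact hu
  | tail _ hxy ih => exact hS _ _ hxy ih

lemma Preconnected.reachable_deleteEdges_or (hG : G.Preconnected) (u v x : V) :
    (G.deleteEdges {s(u, v)}).Reachable u x ∨ (G.deleteEdges {s(u, v)}).Reachable v x := by
  refine (hG u x).mem_of_adj_closed (S := {x | _ ∨ _}) (fun y z hyz hy => ?_) (.inl .rfl)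
  by_cases he : s(y, z) = s(u, v)
  · rcases Sym2.eq_iff.mp he with ⟨rfl, rfl⟩ | ⟨rfl, rfl⟩
    exacts [.inr .rfl, .inl .rfl]
  · have hyz' : (G.deleteEdges {s(u, v)}).Adj y z := deleteEdges_adj.mpr ⟨hyz, he⟩
    exact hy.imp (·.trans hyz'.reachable) (·.trans hyz'.reachable)

lemma Preconnected.exists_adj_reachable_deleteEdges (hG : G.Preconnected) (hx : x ≠ t) :
    ∃ b, G.Adj t b ∧ (G.deleteEdges {s(t, b)}).Reachable b x := by
  have := (hG t x).mem_of_adj_closed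
    (S := {x | x = t ∨ ∃ b, G.Adj t b ∧ (G.deleteEdges {s(t, b)}).Reachable b x})
    (fun y z hyz hy => ?_) (.inl rfl)
  · exact this.resolve_left hx
  rcases hy with rfl | ⟨b, htb, hby⟩
  · exact .inr ⟨z, hyz, .rfl⟩
  by_cases he : s(y, z) = s(t, b)
  · rcases Sym2.eq_iff.mp he with ⟨rfl, rfl⟩ | ⟨-, rfl⟩
    exacts [.inr ⟨z, htb, .rfl⟩, .inl rfl]
  · exact .inr ⟨b, htb, hby.trans (deleteEdges_adj.mpr ⟨hyz, he⟩).reachable⟩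

lemma IsTree.not_reachable_deleteEdges (hT : G.IsTree) (huv : G.Adj u v) :
    ¬ (G.deleteEdges {s(u, v)}).Reachable u v :=
  isBridge_iff.mp (isAcyclic_iff_forall_adj_isBridge.mp hT.isAcyclic huv)

lemma eq_of_reachable_deleteEdges_of_degree_eq_one [Fintype (G.neighborSet t)]
    (ht : G.degree t = 1) (htu : G.Adj t u) (hx : (G.deleteEdges {s(t, u)}).Reachable t x) :
    x = t := by
  refine hx.mem_of_adj_closed (S := {t}) (fun y z hyz hy => ?_) rfl
  obtain ⟨w, hw⟩ := Finset.card_eq_one.mp ((G.card_neighborFinset_eq_degree t).trans ht)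
  have hmem : ∀ {y}, G.Adj t y → y = w := fun hy => by
    simpa [hw] using (G.mem_neighborFinset t _).mpr hy
  rw [Set.mem_singleton_iff] at hy
  subst hy
  rw [deleteEdges_adj] at hyz
  exact (hyz.2 (by rw [hmem hyz.1, hmem htu]; rfl)).elim

/-- If every vertex had an out-edge, choosing one per vertex would inject the vertices into the
edges, but a tree has one edge fewer than vertices. -/
lemma IsTree.exists_sink [Fintype V] (hT : G.IsTree) (H : V → V → Prop)
    (hH : ∀ u v, G.Adj u v → H u v ∨ H v u) : ∃ t, ∀ u, G.Adj t u → H t u := by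
  classical
  by_contra! hno
  choose f hadj hf using hno
  have hinj : Function.Injective fun t => (⟨s(t, f t), hadj t⟩ : G.edgeSet) := by
    intro a b hab
    rcases Sym2.eq_iff.mp (congrArg Subtype.val hab) with ⟨rfl, -⟩ | ⟨ha, hb⟩
    · rfl
    · have hab' : ¬ H a b := hb ▸ hf a
      have hba : ¬ H b a := ha ▸ hf b
      exact ((hH a b (hb ▸ hadj a)).elim hab' hba).elim
  have hcard := Fintype.card_le_of_injective _ hinj
  have := hT.card_edgeFinset
  rw [← edgeFinset_card] at hcard
  omega

end SimpleGraph

namespace BranchDecomp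

variable {E : Type*} (D : BranchDecomp E) {u v t : D.V}

lemma side_swap (huv : D.G.Adj u v) : D.side v u = (D.side u v)ᶜ := by
  ext x
  simp only [side, Set.mem_ofPred_eq, Set.mem_compl_iff, Sym2.eq_swap (a := v) (b := u)]
  constructor
  · exact fun hv hu => D.isTree.not_reachable_deleteEdges huv (hu.trans hv.symm)
  · exact (D.isTree.connected.preconnected.reachable_deleteEdges_or u v _).resolve_left

lemma lam_side_le_width (lam : Set E → ℕ) (huv : D.G.Adj u v) :
    lam (D.side u v) ≤ D.width lam := by
  unfold width
  exact Finset.le_sup (f := fun p : D.V × D.V => lam (D.side p.1 p.2))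
    (Finset.mem_filter.mpr ⟨Finset.mem_univ (u, v), huv⟩)

lemma side_eq_singleton (ht : D.G.degree t = 1) (htu : D.G.Adj t u) :
    D.side t u = {D.L.symm ⟨t, ht⟩} := by
  ext x
  rw [Set.mem_singleton_iff, Equiv.eq_symm_apply, Subtype.ext_iff]
  exact ⟨SimpleGraph.eq_of_reachable_deleteEdges_of_degree_eq_one ht htu,
    fun hx => by rw [side, Set.mem_ofPred_eq, hx]⟩

lemma exists_adj_mem_side (ht : D.G.degree t ≠ 1) (x : E) :
    ∃ u, D.G.Adj t u ∧ x ∈ D.side u t := by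
  have hx : (D.L x).1 ≠ t := fun hx => ht (hx ▸ (D.L x).2)
  obtain ⟨u, htu, hu⟩ := D.isTree.connected.preconnected.exists_adj_reachable_deleteEdges hx
  exact ⟨u, htu, by rwa [side, Set.mem_ofPred_eq, Sym2.eq_swap]⟩

lemma exists_three_sides (ht : D.G.degree t = 3) :
    ∃ u₁ u₂ u₃, D.G.Adj t u₁ ∧ D.G.Adj t u₂ ∧ D.G.Adj t u₃ ∧
      ∀ x, x ∈ D.side u₁ t ∨ x ∈ D.side u₂ t ∨ x ∈ D.side u₃ t := by
  classical
  obtain ⟨u₁, u₂, u₃, -, -, -, hN⟩ :=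
    Finset.card_eq_three.mp ((D.G.card_neighborFinset_eq_degree t).trans ht)
  have hadj : ∀ {u}, D.G.Adj t u ↔ u = u₁ ∨ u = u₂ ∨ u = u₃ := by
    simp [← D.G.mem_neighborFinset, hN]
  refine ⟨u₁, u₂, u₃, hadj.mpr (by simp), hadj.mpr (by simp), hadj.mpr (by simp), fun x => ?_⟩
  obtain ⟨u, htu, hx⟩ := D.exists_adj_mem_side (t := t) (by omega) x
  rcases hadj.mp htu with rfl | rfl | rfl <;> simp [hx]

end BranchDecomp

lemma Set.eq_sUnion_of_forall_subset_or_disjoint {α : Type*} {P : Set (Set α)} {S : Set α}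
    (hcover : ⋃₀ P = Set.univ) (hS : ∀ Z ∈ P, Z ⊆ S ∨ Disjoint Z S) :
    S = ⋃₀ {Z ∈ P | Z ⊆ S} := by
  refine subset_antisymm (fun y hy => ?_) (Set.sUnion_subset fun Z hZ => hZ.2)
  obtain ⟨Z, hZ, hyZ⟩ := Set.mem_sUnion.mp (hcover ▸ Set.mem_univ y)
  refine ⟨Z, ⟨hZ, (hS Z hZ).resolve_right fun hdis => ?_⟩, hyZ⟩
  exact Set.disjoint_left.mp hdis hyZ hy

namespace IsConnFn

variable {E : Type*} {lam : Set E → ℕ}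

lemma lam_union_le (h : IsConnFn lam) (A B : Set E) : lam (A ∪ B) ≤ lam A + lam B := by
  have := h.submod A B
  omega

lemma lam_sdiff_le (h : IsConnFn lam) {X B : Set E} (hXB : lam X ≤ lam (X \ B)) :
    lam (B \ X) ≤ lam B := by
  have hsub := h.submod Xᶜ B
  rw [h.symm (Xᶜ ∪ B), Set.compl_union, compl_compl, ← h.symm X, Set.inter_comm,
    ← Set.sdiff_eq, ← Set.sdiff_eq X B] at hsub
  omega

lemma lam_inter_singleton_le (h : IsConnFn lam) (X : Set E) (e : E) :
    lam (X ∩ {e}) ≤ lam {e} := by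
  by_cases he : e ∈ X
  · rw [Set.inter_singleton_of_mem he]
  · rw [Set.inter_singleton_eq_empty.mpr he, h.empty]
    exact Nat.zero_le _

end IsConnFn

section RobustPartition

variable {E : Type*} {lam : Set E → ℕ} {P : Set (Set E)} {X B : Set E}

/-- A set `B` with `lam B ≤ 1` crossing the part `X` cannot cross any other part, so `B \ X` is a
union of parts. -/
lemma lam_sdiff_eq_zero (h : IsConnFn lam)
    (hdisj : ∀ X ∈ P, ∀ Y ∈ P, X ≠ Y → Disjoint X Y) (hcover : ⋃₀ P = Set.univ)
    (h1 : ∀ Q ⊆ P, lam (⋃₀ Q) ≠ 1)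
    (h2 : ∀ X : Set E, (∃ X1 ∈ P, ∃ X2 ∈ P, X1 ≠ X2 ∧
      (X ∩ X1).Nonempty ∧ (X1 \ X).Nonempty ∧
      (X ∩ X2).Nonempty ∧ (X2 \ X).Nonempty) → 1 < lam X)
    (hX : X ∈ P) (hB : lam B ≤ 1) (hXB : lam X ≤ lam (X \ B)) (hout : (X \ B).Nonempty)
    (hin : (B ∩ X).Nonempty) : lam (B \ X) = 0 := by
  have hparts : ∀ Z ∈ P, Z ⊆ B \ X ∨ Disjoint Z (B \ X) := by
    intro Z hZ
    by_cases hZX : Z = X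
    · exact .inr (hZX ▸ Set.disjoint_sdiff_right)
    rcases (Z \ B).eq_empty_or_nonempty with hZB | hZB
    · exact .inl fun z hz => ⟨Set.sdiff_eq_empty.mp hZB hz,
        Set.disjoint_left.mp (hdisj Z hZ X hX hZX) hz⟩
    · refine .inr (Set.disjoint_left.mpr fun z hz hzB => ?_)
      have := h2 B ⟨X, hX, Z, hZ, Ne.symm hZX, hin, hout, ⟨z, hzB.1, hz⟩, hZB⟩
      omega
  have hunion := h1 _ (Set.sep_subset P fun Z => Z ⊆ B \ X)
  rw [← Set.eq_sUnion_of_forall_subset_or_disjoint hcover hparts] at hunion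
  have := h.lam_sdiff_le hXB
  omega

lemma lam_le_one_of_three_branches (h : IsConnFn lam)
    (hdisj : ∀ X ∈ P, ∀ Y ∈ P, X ≠ Y → Disjoint X Y) (hcover : ⋃₀ P = Set.univ)
    (h1 : ∀ Q ⊆ P, lam (⋃₀ Q) ≠ 1)
    (h2 : ∀ X : Set E, (∃ X1 ∈ P, ∃ X2 ∈ P, X1 ≠ X2 ∧
      (X ∩ X1).Nonempty ∧ (X1 \ X).Nonempty ∧
      (X ∩ X2).Nonempty ∧ (X2 \ X).Nonempty) → 1 < lam X)
    (hX : X ∈ P) {B₁ B₂ B₃ : Set E} (hcov : ∀ x, x ∈ B₁ ∨ x ∈ B₂ ∨ x ∈ B₃)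
    (hB₁ : lam B₁ ≤ 1) (hB₂ : lam B₂ ≤ 1) (hB₃ : lam B₃ ≤ 1)
    (hXB₁ : lam X ≤ lam (X \ B₁)) (hXB₂ : lam X ≤ lam (X \ B₂))
    (hXB₃ : lam X ≤ lam (X \ B₃)) : lam X ≤ 1 := by
  by_contra! hk
  have hout : ∀ {B}, lam X ≤ lam (X \ B) → (X \ B).Nonempty := fun hXB =>
    Set.nonempty_iff_ne_empty.mpr fun he => by rw [he, h.empty] at hXB; omega
  have hle : ∀ {B}, lam B ≤ 1 → lam X ≤ lam (X \ B) → lam (B \ X) ≤ 1 := fun hB hXB =>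
    (h.lam_sdiff_le hXB).trans hB
  have hzero : ∀ {B}, lam B ≤ 1 → lam X ≤ lam (X \ B) → (B ∩ X).Nonempty →
      lam (B \ X) = 0 := fun hB hXB =>
    lam_sdiff_eq_zero h hdisj hcover h1 h2 hX hB hXB (hout hXB)
  have hmeet : ∀ {A B C : Set E}, (∀ x, x ∈ A ∨ x ∈ B ∨ x ∈ C) → lam X ≤ lam (X \ C) →
      (A ∩ X).Nonempty ∨ (B ∩ X).Nonempty := by
    intro A B C hABC hXC
    obtain ⟨x, hxX, hxC⟩ := hout hXC
    exact (hABC x).imp (⟨x, ·, hxX⟩) fun hx => ⟨x, hx.resolve_right hxC, hxX⟩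
  have h₁₂ := (hmeet hcov hXB₃).imp (hzero hB₁ hXB₁) (hzero hB₂ hXB₂)
  have h₁₃ := (hmeet (fun x => by have := hcov x; tauto) hXB₂).imp
    (hzero hB₁ hXB₁) (hzero hB₃ hXB₃)
  have h₂₃ := (hmeet (fun x => by have := hcov x; tauto) hXB₁).imp
    (hzero hB₂ hXB₂) (hzero hB₃ hXB₃)
  have hsum : lam Xᶜ ≤ lam (B₁ \ X) + lam (B₂ \ X) + lam (B₃ \ X) := by
    have hXc : Xᶜ = B₁ \ X ∪ B₂ \ X ∪ B₃ \ X := by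
      ext x
      have := hcov x
      simp only [Set.mem_compl_iff, Set.mem_union, Set.mem_sdiff]
      tauto
    rw [hXc]
    exact (h.lam_union_le _ _).trans (Nat.add_le_add_right (h.lam_union_le _ _) _)
  have := hle hB₁ hXB₁
  have := hle hB₂ hXB₂
  have := hle hB₃ hXB₃
  rw [← h.symm] at hsum
  omega

end RobustPartition

theorem stmt14_general {E : Type*} (lam : Set E → ℕ) (h : IsConnFn lam)
    (P : Set (Set E))
    (hdisj : ∀ X ∈ P, ∀ Y ∈ P, X ≠ Y → Disjoint X Y)
    (hcover : ⋃₀ P = Set.univ)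
    (hrobust : ∀ X ∈ P, ∀ X1 X2 : Set E, Disjoint X1 X2 → X1 ∪ X2 = X →
      lam X ≤ lam X1 ∨ lam X ≤ lam X2)
    (h1 : ∀ Q ⊆ P, lam (⋃₀ Q) ≠ 1)
    (h2 : ∀ X : Set E, (∃ X1 ∈ P, ∃ X2 ∈ P, X1 ≠ X2 ∧
      (X ∩ X1).Nonempty ∧ (X1 \ X).Nonempty ∧
      (X ∩ X2).Nonempty ∧ (X2 \ X).Nonempty) → 1 < lam X)
    (hD : ∃ D : BranchDecomp E, D.width lam ≤ 1) :
    ∀ X ∈ P, lam X = 0 := by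
  obtain ⟨D, hw⟩ := hD
  intro X hX
  have hX1 : lam X ≠ 1 := by simpa using h1 {X} (Set.singleton_subset_iff.mpr hX)
  have hside : ∀ {u v}, D.G.Adj u v → lam (D.side u v) ≤ 1 := fun huv =>
    (D.lam_side_le_width lam huv).trans hw
  have hsplit : ∀ u v, D.G.Adj u v →
      lam X ≤ lam (X ∩ D.side u v) ∨ lam X ≤ lam (X ∩ D.side v u) := by
    intro u v huv
    rw [D.side_swap huv]
    exact hrobust X hX _ _ (disjoint_compl_right.mono Set.inter_subset_right
      Set.inter_subset_right) (Set.inter_union_compl X _)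
  obtain ⟨t, ht⟩ := D.isTree.exists_sink (fun u v => lam X ≤ lam (X ∩ D.side u v)) hsplit
  rcases D.subcubic t with hdeg | hdeg
  · obtain ⟨u, htu⟩ := (D.G.degree_pos_iff_exists_adj t).mp (by omega)
    have hXt := ht u htu
    have hleaf := hside htu
    rw [D.side_eq_singleton hdeg htu] at hXt hleaf
    have := h.lam_inter_singleton_le X (D.L.symm ⟨t, hdeg⟩)
    omega
  · obtain ⟨u₁, u₂, u₃, h₁, h₂, h₃, hcov⟩ := D.exists_three_sides hdeg
    have hXB : ∀ {u}, D.G.Adj t u → lam X ≤ lam (X \ D.side u t) := fun htu => by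
      rw [Set.sdiff_eq, ← D.side_swap htu.symm]
      exact ht _ htu
    have := lam_le_one_of_three_branches h hdisj hcover h1 h2 hX hcov (hside h₁.symm)
      (hside h₂.symm) (hside h₃.symm) (hXB h₁) (hXB h₂) (hXB h₃)
    omega

theorem stmt14 {E : Type*} [Finite E] (lam : Set E → ℕ) (h : IsConnFn lam)
    (P : Set (Set E))
    (hdisj : ∀ X ∈ P, ∀ Y ∈ P, X ≠ Y → Disjoint X Y)
    (hcover : ⋃₀ P = Set.univ) (hne : ∀ X ∈ P, X.Nonempty)
    (hrobust : ∀ X ∈ P, ∀ X1 X2 : Set E, Disjoint X1 X2 → X1 ∪ X2 = X →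
      lam X ≤ lam X1 ∨ lam X ≤ lam X2)
    (h1 : ∀ Q ⊆ P, lam (⋃₀ Q) ≠ 1)
    (h2 : ∀ X : Set E, (∃ X1 ∈ P, ∃ X2 ∈ P, X1 ≠ X2 ∧
      (X ∩ X1).Nonempty ∧ (X1 \ X).Nonempty ∧
      (X ∩ X2).Nonempty ∧ (X2 \ X).Nonempty) → 1 < lam X)
    (hD : ∃ D : BranchDecomp E, D.width lam ≤ 1) :
    ∀ X ∈ P, lam X = 0 :=
  stmt14_general lam h P hdisj hcover hrobust h1 h2 hD
end

section
/- Let A be a matrix over a field with at least one column and let α, β, γ, δ be four distinct elements of the field. Then rank(d⁺(A)) = rank(A) + 1, where d⁺(A) is the matrix (A | A | A | A) with one additional row whose entries are α on the first block of columns, β on the second, γ on the third, and δ on the fourth. -/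
/-- `d⁺(A)`: four side-by-side copies of `A` with one extra row taking the values
`α`, `β`, `γ`, `δ` on the four respective blocks of columns. -/
def dPlus {m n F : Type*} (α β γ δ : F) (A : Matrix m n F) :
    Matrix (Option m) (Fin 4 × n) F :=
  fun i p => Option.elim i (![α, β, γ, δ] p.1) (fun i' => A i' p.2)

/-!
Deleting the new row maps the column space of `d⁺(A)` onto that of `A`, and the kernel of this
restriction, the line spanned by the new coordinate vector `e`, already lies in the column space:
the difference of the `α`- and `β`-copies of a column of `A` is `(α - β) • e`. Hence the column
space of `d⁺(A)` is the full preimage of that of `A`, which has exactly one more dimension.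
-/

open Matrix Module

theorem Submodule.finrank_comap_of_surjective {K V W : Type*} [DivisionRing K]
    [AddCommGroup V] [Module K V] [AddCommGroup W] [Module K W] [FiniteDimensional K V]
    {f : V →ₗ[K] W} (hf : Function.Surjective f) (p : Submodule K W) :
    finrank K (p.comap f) = finrank K p + finrank K (LinearMap.ker f) := by
  have h := LinearMap.finrank_range_add_finrank_ker (f.domRestrict (p.comap f))
  rw [LinearMap.range_domRestrict, Submodule.map_comap_eq_of_surjective hf,
    LinearMap.ker_domRestrict,
    (Submodule.comapSubtypeEquivOfLe (LinearMap.ker_le_comap f)).finrank_eq] at h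
  exact h.symm

theorem LinearMap.ker_funLeft_some (R ι : Type*) [Semiring R] [DecidableEq ι] :
    LinearMap.ker (LinearMap.funLeft R R (some : ι → Option ι)) =
      Submodule.span R {Pi.single none 1} := by
  ext f
  rw [LinearMap.mem_ker, Submodule.mem_span_singleton]
  constructor
  · intro hf
    refine ⟨f none, funext fun o => ?_⟩
    cases o with
    | none => simp
    | some i => simpa using (congrFun hf i).symm
  · rintro ⟨c, rfl⟩
    ext i
    simp

theorem Matrix.submatrix_id_mulVecLin {R m m₀ n : Type*} [CommSemiring R] [Fintype n]
    (M : Matrix m n R) (r : m₀ → m) :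
    (M.submatrix r id).mulVecLin = LinearMap.funLeft R R r ∘ₗ M.mulVecLin :=
  rfl

theorem Matrix.range_mulVecLin_submatrix_of_surjective {R m n n₀ : Type*} [CommSemiring R]
    [Fintype n] [Fintype n₀] (M : Matrix m n R) {c : n₀ → n} (hc : Function.Surjective c) :
    LinearMap.range (M.submatrix id c).mulVecLin = LinearMap.range M.mulVecLin := by
  rw [range_mulVecLin, range_mulVecLin]
  exact congrArg _ (hc.range_comp M.col)

section

variable {m n F : Type*} (α β γ δ : F) (A : Matrix m n F)

theorem dPlus_submatrix_some : (dPlus α β γ δ A).submatrix some id = A.submatrix id Prod.snd :=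
  rfl

theorem dPlus_col_zero_sub_col_one [DecidableEq m] [Field F] (j : n) :
    (dPlus α β γ δ A).col (0, j) - (dPlus α β γ δ A).col (1, j) = Pi.single none (α - β) := by
  ext (_ | i) <;> simp [dPlus]

variable [Fintype n] [Field F]

theorem single_none_mem_range_dPlus [DecidableEq m] [Nonempty n] (hαβ : α ≠ β) :
    (Pi.single none 1 : Option m → F) ∈ LinearMap.range (dPlus α β γ δ A).mulVecLin := by
  obtain ⟨j⟩ := ‹Nonempty n›
  rw [range_mulVecLin]
  have hscale : (Pi.single none 1 : Option m → F) = (α - β)⁻¹ • Pi.single none (α - β) := by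
    rw [← Pi.single_smul', smul_eq_mul, inv_mul_cancel₀ (sub_ne_zero.2 hαβ)]
  rw [hscale, ← dPlus_col_zero_sub_col_one α β γ δ A j]
  exact Submodule.smul_mem _ _ (Submodule.sub_mem _ (Submodule.subset_span ⟨_, rfl⟩)
    (Submodule.subset_span ⟨_, rfl⟩))

theorem range_dPlus_mulVecLin [Nonempty n] (hαβ : α ≠ β) :
    LinearMap.range (dPlus α β γ δ A).mulVecLin =
      (LinearMap.range A.mulVecLin).comap (LinearMap.funLeft F F some) := by
  classical
  set R := LinearMap.funLeft F F (some : m → Option m)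
  have hker : LinearMap.ker R ≤ LinearMap.range (dPlus α β γ δ A).mulVecLin := by
    rw [LinearMap.ker_funLeft_some, Submodule.span_le, Set.singleton_subset_iff]
    exact single_none_mem_range_dPlus α β γ δ A hαβ
  have hmap :
      (LinearMap.range (dPlus α β γ δ A).mulVecLin).map R = LinearMap.range A.mulVecLin := by
    rw [← LinearMap.range_comp, ← submatrix_id_mulVecLin, dPlus_submatrix_some]
    exact A.range_mulVecLin_submatrix_of_surjective Prod.snd_surjective
  rw [← hmap, Submodule.comap_map_eq, sup_eq_left.2 hker]

end

theorem stmt17 {m n F : Type*} [Fintype m] [Fintype n] [Nonempty n] [Field F]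
    (α β γ δ : F) (hd : [α, β, γ, δ].Pairwise (· ≠ ·)) (A : Matrix m n F) :
    (dPlus α β γ δ A).rank = A.rank + 1 := by
  classical
  have hαβ : α ≠ β := (List.pairwise_cons.1 hd).1 β (by simp)
  rw [rank, range_dPlus_mulVecLin α β γ δ A hαβ, Submodule.finrank_comap_of_surjective
    (LinearMap.funLeft_surjective_of_injective F F _ (Option.some_injective m)),
    LinearMap.ker_funLeft_some, finrank_span_singleton (Pi.single_ne_zero_iff.2 one_ne_zero),
    rank]
end
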